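/- For smooth positive probability densities p⋆ and p_θ on ℝ^D satisfying suitable decay at infinity (so boundary terms in integration by parts vanish and all integrals are finite), the Fisher divergence D∇[p⋆ ‖ p_θ] = E_{p⋆}[½‖∇ log p⋆(x) − ∇ log p_θ(x)‖²] equals E_{p⋆}[½‖∇ log p⋆(x)‖²] + E_{p⋆}[½‖∇ log p_θ(x)‖² + Δ log p_θ(x)], i.e., the Fisher divergence decomposes into a constant depending only on p⋆ plus the expected Hyvärinen score of p_θ. -/

import Mathlib

/-!
Expanding the square,
`½‖∇log p⋆ - ∇log pθ‖² = ½‖∇log p⋆‖² - ⟪∇log p⋆, ∇log pθ⟫ + ½‖∇log pθ‖²`,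
and `p⋆ ∇log p⋆ = ∇p⋆`, so the expected cross term is `∫ ⟪∇p⋆, ∇log pθ⟫ = -∫ p⋆ Δlog pθ` by
Green's identity on the whole space. That identity says that an integrable `C¹` vector field with
integrable divergence has divergence of integral zero: on the cube `[-R, R]ᴰ` the divergence
theorem bounds the integral of the divergence by face integrals whose total is an integrable
function of `R`, so the limit as `R → ∞` must vanish.
-/

open MeasureTheory Real Filter
open scoped RealInnerProductSpace BigOperators

/-- Laplacian of `f : ℝ^n → ℝ` as the sum of second partial derivatives. -/
noncomputable def lap {n : ℕ} (f : EuclideanSpace ℝ (Fin n) → ℝ)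
    (x : EuclideanSpace ℝ (Fin n)) : ℝ :=
  ∑ i : Fin n, fderiv ℝ (fun y => fderiv ℝ f y (EuclideanSpace.single i 1)) x
    (EuclideanSpace.single i 1)

/-- Hyvärinen score `s∇[f](x) = ½‖∇ log f(x)‖² + Δ log f(x)`. -/
noncomputable def hyv {n : ℕ} (f : EuclideanSpace ℝ (Fin n) → ℝ)
    (x : EuclideanSpace ℝ (Fin n)) : ℝ :=
  (1/2) * ‖gradient (fun y => Real.log (f y)) x‖^2 + lap (fun y => Real.log (f y)) x

open Set Topology

section DivergenceOnWholeSpace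

variable {E : Type*} [NormedAddCommGroup E]

lemma eq_zero_of_tendsto_of_norm_le_integrableOn {φ : ℝ → E} {H : ℝ → ℝ} {L : E} {a : ℝ}
    (hφ : Tendsto φ atTop (𝓝 L)) (hH : IntegrableOn H (Ioi a))
    (hle : ∀ᵐ R, a < R → ‖φ R‖ ≤ H R) : L = 0 := by
  by_contra hL
  obtain ⟨R₀, hR₀⟩ := eventually_atTop.1
    ((hφ.norm.eventually (lt_mem_nhds (half_lt_self (norm_pos_iff.2 hL)))))
  have hconst : IntegrableOn (fun _ => ‖L‖ / 2) (Ioi (max a R₀)) := by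
    refine (hH.mono_set (Ioi_subset_Ioi (le_max_left _ _))).mono' aestronglyMeasurable_const ?_
    rw [ae_restrict_iff' measurableSet_Ioi]
    filter_upwards [hle] with R hR hmem
    rw [Real.norm_of_nonneg (by positivity)]
    exact (hR₀ R ((le_max_right _ _).trans hmem.le)).le.trans
      (hR ((le_max_left _ _).trans_lt hmem))
  rw [integrableOn_const_iff, Real.volume_Ioi] at hconst
  simp_all

lemma integrable_comp_insertNth {n : ℕ} {f : (Fin (n + 1) → ℝ) → E} (hf : Integrable f)
    (i : Fin (n + 1)) :
    Integrable (fun p : ℝ × (Fin n → ℝ) => f (i.insertNth p.1 p.2)) (volume.prod volume) := by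
  have hP : MeasurePreserving (MeasurableEquiv.piFinSuccAbove (fun _ => ℝ) i).symm
      (volume.prod volume) volume := by
    simpa [volume_pi] using
      (measurePreserving_piFinSuccAbove (fun _ => (volume : Measure ℝ)) i).symm
  exact (hP.integrable_comp_emb (MeasurableEquiv.measurableEmbedding _)).2 hf

lemma aecover_Icc_pi {ι : Type*} [Fintype ι] (μ : Measure (ι → ℝ)) :
    AECover μ atTop (fun R : ℝ => Icc (fun _ : ι => -R) (fun _ => R)) where
  ae_eventually_mem := ae_of_all _ fun x => by
    filter_upwards [eventually_ge_atTop ‖x‖] with R hR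
    exact ⟨fun i => neg_le_of_abs_le ((norm_le_pi_norm x i).trans hR),
      fun i => le_of_abs_le ((norm_le_pi_norm x i).trans hR)⟩
  measurableSet _ := measurableSet_Icc

variable [NormedSpace ℝ E]

lemma norm_setIntegral_le_integral_norm {α : Type*} [MeasurableSpace α] {μ : Measure α}
    {g : α → E} (hg : Integrable g μ) (s : Set α) :
    ‖∫ x in s, g x ∂μ‖ ≤ ∫ x, ‖g x‖ ∂μ :=
  (norm_integral_le_integral_norm _).trans
    (setIntegral_le_integral hg.norm (ae_of_all _ fun _ => norm_nonneg _))

variable {n : ℕ}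

theorem integral_divergence_eq_zero_of_integrable
    (f : Fin (n + 1) → (Fin (n + 1) → ℝ) → E)
    (f' : Fin (n + 1) → (Fin (n + 1) → ℝ) → (Fin (n + 1) → ℝ) →L[ℝ] E)
    (hf' : ∀ i x, HasFDerivAt (f i) (f' i x) x) (hf : ∀ i, Integrable (f i))
    (hdiv : Integrable fun x => ∑ i, f' i x (Pi.single i 1)) :
    ∫ x, ∑ i, f' i x (Pi.single i 1) = 0 := by
  set slice : Fin (n + 1) → ℝ → ℝ := fun i t => ∫ y, ‖f i (i.insertNth t y)‖
  set H : ℝ → ℝ := fun t => ∑ i, (slice i t + slice i (-t))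
  have hH : Integrable H := integrable_finsetSum _ fun i _ =>
    have := (integrable_comp_insertNth (hf i) i).integral_norm_prod_left
    this.add this.comp_neg
  have hslice : ∀ᵐ t, ∀ i, Integrable (fun y => f i (i.insertNth t y)) ∧
      Integrable (fun y => f i (i.insertNth (-t) y)) := by
    rw [ae_all_iff]
    intro i
    have h := (integrable_comp_insertNth (hf i) i).prod_right_ae
    exact h.and ((Measure.measurePreserving_neg volume).quasiMeasurePreserving.ae h)
  have hbox :=
    (aecover_Icc_pi (volume : Measure (Fin (n + 1) → ℝ))).integral_tendsto_of_countably_generated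
      hdiv
  refine eq_zero_of_tendsto_of_norm_le_integrableOn hbox hH.integrableOn (a := 0) ?_
  filter_upwards [hslice] with R hR hR0
  -- By the divergence theorem on `[-R, R]ⁿ⁺¹`, the box integral is a sum of face integrals,
  -- each dominated by a slice of `‖f i‖` at height `±R`.
  rw [integral_divergence_of_hasFDerivAt_off_countable' _ _ (fun _ => by linarith) f f' ∅
    countable_empty (fun i x _ => (hf' i x).continuousAt.continuousWithinAt)
    (fun x _ i => hf' i x) hdiv.integrableOn]
  refine (norm_sum_le _ _).trans (Finset.sum_le_sum fun i _ => (norm_sub_le _ _).trans ?_)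
  exact add_le_add (norm_setIntegral_le_integral_norm (hR i).1 _)
    (norm_setIntegral_le_integral_norm (hR i).2 _)

theorem EuclideanSpace.integral_divergence_eq_zero_of_integrable
    (f : Fin n → EuclideanSpace ℝ (Fin n) → E)
    (f' : Fin n → EuclideanSpace ℝ (Fin n) → EuclideanSpace ℝ (Fin n) →L[ℝ] E)
    (hf' : ∀ i x, HasFDerivAt (f i) (f' i x) x) (hf : ∀ i, Integrable (f i))
    (hdiv : Integrable fun x => ∑ i, f' i x (EuclideanSpace.single i 1)) :
    ∫ x, ∑ i, f' i x (EuclideanSpace.single i 1) = 0 := by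
  cases n with
  | zero => simp
  | succ n =>
    have hφ := (EuclideanSpace.volume_preserving_symm_measurableEquiv_toLp (Fin (n + 1))).symm
    have hemb := (MeasurableEquiv.toLp 2 (Fin (n + 1) → ℝ)).measurableEmbedding
    let ι := (EuclideanSpace.equiv (Fin (n + 1)) ℝ).symm
    rw [← hφ.integral_comp hemb]
    exact integral_divergence_eq_zero_of_integrable (fun i x => f i (ι x))
      (fun i x => (f' i (ι x)).comp (ι : (Fin (n + 1) → ℝ) →L[ℝ] _))
      (fun i x => (hf' i (ι x)).comp x ι.hasFDerivAt)
      (fun i => (hφ.integrable_comp_emb hemb).2 (hf i)) ((hφ.integrable_comp_emb hemb).2 hdiv)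

end DivergenceOnWholeSpace

section WeightedIntegrals

variable {α F : Type*} [MeasurableSpace α] {μ : Measure α} [NormedAddCommGroup F]
  [InnerProductSpace ℝ F] {p : α → ℝ} {v w : α → F}

lemma integrable_mul_inner_of_mul_norm_sq (hp : ∀ x, 0 ≤ p x)
    (hv : Integrable (fun x => p x * ‖v x‖ ^ 2) μ) (hw : Integrable (fun x => p x * ‖w x‖ ^ 2) μ)
    (hm : AEStronglyMeasurable (fun x => p x * ⟪v x, w x⟫) μ) :
    Integrable (fun x => p x * ⟪v x, w x⟫) μ := by
  refine ((hv.add hw).div_const 2).mono' hm (ae_of_all _ fun x => ?_)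
  have hvw := abs_real_inner_le_norm (v x) (w x)
  simp only [Pi.add_apply, Real.norm_eq_abs, abs_mul, abs_of_nonneg (hp x)]
  nlinarith [hp x, mul_le_mul_of_nonneg_left hvw (hp x), sq_nonneg (‖v x‖ - ‖w x‖)]

lemma integrable_smul_of_mul_norm_sq (hp : ∀ x, 0 ≤ p x) (hpi : Integrable p μ)
    (hw : Integrable (fun x => p x * ‖w x‖ ^ 2) μ)
    (hm : AEStronglyMeasurable (fun x => p x • w x) μ) :
    Integrable (fun x => p x • w x) μ := by
  refine ((hpi.add hw).div_const 2).mono' hm (ae_of_all _ fun x => ?_)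
  simp only [Pi.add_apply, norm_smul, Real.norm_of_nonneg (hp x)]
  nlinarith [hp x, mul_nonneg (hp x) (sq_nonneg (‖w x‖ - 1))]

lemma integral_mul_half_norm_sub_sq (hv : Integrable (fun x => p x * ‖v x‖ ^ 2) μ)
    (hw : Integrable (fun x => p x * ‖w x‖ ^ 2) μ)
    (hvw : Integrable (fun x => p x * ⟪v x, w x⟫) μ) :
    ∫ x, p x * ((1/2) * ‖v x - w x‖ ^ 2) ∂μ
      = (∫ x, p x * ((1/2) * ‖v x‖ ^ 2) ∂μ) - (∫ x, p x * ⟪v x, w x⟫ ∂μ)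
        + ∫ x, p x * ((1/2) * ‖w x‖ ^ 2) ∂μ := by
  have hv' : Integrable (fun x => p x * ((1/2) * ‖v x‖ ^ 2)) μ := by
    simpa only [mul_left_comm] using hv.const_mul (1/2)
  have hw' : Integrable (fun x => p x * ((1/2) * ‖w x‖ ^ 2)) μ := by
    simpa only [mul_left_comm] using hw.const_mul (1/2)
  have hvw' : Integrable (fun x => p x * ((1/2) * ‖v x‖ ^ 2) - p x * ⟪v x, w x⟫) μ :=
    hv'.sub hvw
  calc ∫ x, p x * ((1/2) * ‖v x - w x‖ ^ 2) ∂μ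
      = ∫ x, p x * ((1/2) * ‖v x‖ ^ 2) - p x * ⟪v x, w x⟫
          + p x * ((1/2) * ‖w x‖ ^ 2) ∂μ := by
        congr 1; funext x; rw [norm_sub_sq_real]; ring
    _ = _ := by rw [integral_add hvw' hw', integral_sub hv' hvw]

end WeightedIntegrals

section GreenIdentity

variable {n : ℕ}

lemma EuclideanSpace.gradient_apply (f : EuclideanSpace ℝ (Fin n) → ℝ)
    (x : EuclideanSpace ℝ (Fin n)) (i : Fin n) :
    gradient f x i = fderiv ℝ f x (EuclideanSpace.single i 1) := by
  rw [← inner_gradient_left, EuclideanSpace.inner_single_right, one_mul, conj_trivial]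

lemma gradient.log {F : Type*} [NormedAddCommGroup F] [InnerProductSpace ℝ F]
    [CompleteSpace F] {f : F → ℝ} {x : F} (hf : DifferentiableAt ℝ f x) (hfx : f x ≠ 0) :
    gradient (fun y => Real.log (f y)) x = (f x)⁻¹ • gradient f x := by
  rw [gradient, fderiv.log hf hfx, map_smul, gradient]

lemma ContDiff.continuous_gradient {F : Type*} [NormedAddCommGroup F] [InnerProductSpace ℝ F]
    [CompleteSpace F] {f : F → ℝ} (hf : ContDiff ℝ 1 f) : Continuous (gradient f) :=
  (InnerProductSpace.toDual ℝ F).symm.continuous.comp (hf.continuous_fderiv one_ne_zero)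

lemma measurable_lap (u : EuclideanSpace ℝ (Fin n) → ℝ) : Measurable (lap u) :=
  Finset.measurable_sum _ fun _ _ => measurable_fderiv_apply_const ℝ _ _

theorem integral_mul_lap_eq_neg_integral_inner_gradient {p u : EuclideanSpace ℝ (Fin n) → ℝ}
    (hp : Differentiable ℝ p) (hu : ContDiff ℝ 2 u)
    (hpu : Integrable fun x => p x • gradient u x) (hlap : Integrable fun x => p x * lap u x)
    (hinner : Integrable fun x => ⟪gradient p x, gradient u x⟫) :
    ∫ x, p x * lap u x = -∫ x, ⟪gradient p x, gradient u x⟫ := by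
  have hdu i : Differentiable ℝ fun x => fderiv ℝ u x (EuclideanSpace.single i 1) :=
    ((hu.fderiv_right (m := 1) (by norm_num)).clm_apply contDiff_const).differentiable one_ne_zero
  set V' : Fin n → EuclideanSpace ℝ (Fin n) → EuclideanSpace ℝ (Fin n) →L[ℝ] ℝ := fun i x =>
    p x • fderiv ℝ (fun y => fderiv ℝ u y (EuclideanSpace.single i 1)) x
      + fderiv ℝ u x (EuclideanSpace.single i 1) • fderiv ℝ p x
  have hdiv x : ∑ i, V' i x (EuclideanSpace.single i 1)
      = p x * lap u x + ⟪gradient p x, gradient u x⟫ := by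
    simp only [V', add_apply, smul_apply, smul_eq_mul, Finset.sum_add_distrib, lap,
      Finset.mul_sum, PiLp.inner_apply, RCLike.inner_apply, conj_trivial,
      EuclideanSpace.gradient_apply, mul_comm]
  have hV := EuclideanSpace.integral_divergence_eq_zero_of_integrable
    (fun i x => p x * fderiv ℝ u x (EuclideanSpace.single i 1)) V'
    (fun i x => (hp x).hasFDerivAt.mul (hdu i x).hasFDerivAt)
    (fun i => by simpa [EuclideanSpace.gradient_apply] using
      (EuclideanSpace.proj i : EuclideanSpace ℝ (Fin n) →L[ℝ] ℝ).integrable_comp hpu)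
    ((hlap.add hinner).congr (ae_of_all _ fun x => (hdiv x).symm))
  simp only [hdiv] at hV
  rw [integral_add hlap hinner] at hV
  exact eq_neg_of_add_eq_zero_left hV

theorem integral_mul_inner_gradient_log_eq_neg_integral_mul_lap
    {p u : EuclideanSpace ℝ (Fin n) → ℝ} (hp : Differentiable ℝ p) (hpos : ∀ x, 0 < p x)
    (hpi : Integrable p) (hu : ContDiff ℝ 2 u)
    (hpu : Integrable fun x => p x * ‖gradient u x‖ ^ 2)
    (hinner : Integrable fun x => p x * ⟪gradient (fun y => Real.log (p y)) x, gradient u x⟫)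
    (hlap : Integrable fun x => p x * lap u x) :
    ∫ x, p x * ⟪gradient (fun y => Real.log (p y)) x, gradient u x⟫
      = -∫ x, p x * lap u x := by
  have hgrad x : p x * ⟪gradient (fun y => Real.log (p y)) x, gradient u x⟫
      = ⟪gradient p x, gradient u x⟫ := by
    rw [gradient.log (hp x) (hpos x).ne', real_inner_smul_left,
      mul_inv_cancel_left₀ (hpos x).ne']
  simp only [hgrad] at hinner ⊢
  rw [integral_mul_lap_eq_neg_integral_inner_gradient hp hu ?_ hlap hinner, neg_neg]
  exact integrable_smul_of_mul_norm_sq (fun x => (hpos x).le) hpi hpu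
    (hp.continuous.smul (hu.of_le one_le_two).continuous_gradient).aestronglyMeasurable

end GreenIdentity

theorem fisher_divergence_eq_const_add_expected_hyvarinen_score_general
    {D : ℕ} (ps pt : EuclideanSpace ℝ (Fin D) → ℝ)
    (hps : ContDiff ℝ 2 ps) (hpt : ContDiff ℝ 2 pt)
    (hpos : ∀ x, 0 < ps x) (hpos' : ∀ x, 0 < pt x)
    (hnorm : ∫ x, ps x = 1)
    (hi1 : Integrable (fun x => ps x * ‖gradient (fun y => Real.log (ps y)) x‖^2))
    (hi2 : Integrable (fun x => ps x * ‖gradient (fun y => Real.log (pt y)) x‖^2))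
    (hi3 : Integrable (fun x => ps x * |lap (fun y => Real.log (pt y)) x|)) :
    ∫ x, ps x * ((1/2) * ‖gradient (fun y => Real.log (ps y)) x
        - gradient (fun y => Real.log (pt y)) x‖^2)
      = (∫ x, ps x * ((1/2) * ‖gradient (fun y => Real.log (ps y)) x‖^2))
        + ∫ x, ps x * hyv pt x := by
  have hlog_ps : ContDiff ℝ 1 fun y => Real.log (ps y) :=
    (hps.log fun x => (hpos x).ne').of_le one_le_two
  have hlog_pt : ContDiff ℝ 2 fun y => Real.log (pt y) := hpt.log fun x => (hpos' x).ne'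
  have hlap : Integrable fun x => ps x * lap (fun y => Real.log (pt y)) x :=
    hi3.mono' (hps.continuous.aestronglyMeasurable.mul (measurable_lap _).aestronglyMeasurable)
      (ae_of_all _ fun x => by rw [norm_mul, Real.norm_of_nonneg (hpos x).le, Real.norm_eq_abs])
  have hinner := integrable_mul_inner_of_mul_norm_sq (fun x => (hpos x).le) hi1 hi2
    (hps.continuous.mul (hlog_ps.continuous_gradient.inner
      (hlog_pt.of_le one_le_two).continuous_gradient)).aestronglyMeasurable
  have hhalf_sq :
      Integrable fun x => ps x * ((1/2) * ‖gradient (fun y => Real.log (pt y)) x‖ ^ 2) := by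
    simpa only [mul_left_comm] using hi2.const_mul (1/2)
  rw [integral_mul_half_norm_sub_sq hi1 hi2 hinner,
    integral_mul_inner_gradient_log_eq_neg_integral_mul_lap (hps.differentiable two_ne_zero) hpos
      (.of_integral_ne_zero (by simp [hnorm])) hlog_pt hi2 hinner hlap]
  simp only [hyv, mul_add]
  rw [integral_add hhalf_sq hlap]
  ring

/-- Fisher divergence decomposes as a data-dependent constant plus the expected
Hyvärinen score. -/
theorem fisher_divergence_eq_const_add_expected_hyvarinen_score
    {D : ℕ} (ps pt : EuclideanSpace ℝ (Fin D) → ℝ)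
    (hps : ContDiff ℝ 2 ps) (hpt : ContDiff ℝ 2 pt)
    (hpos : ∀ x, 0 < ps x) (hpos' : ∀ x, 0 < pt x)
    (hnorm : ∫ x, ps x = 1) (hnorm' : ∫ x, pt x = 1)
    (hdecay : Tendsto (fun x => ‖gradient ps x‖ * pt x / ps x)
      (cocompact (EuclideanSpace ℝ (Fin D))) (nhds 0))
    (hi0 : Integrable (fun x => ps x *
      ((1/2) * ‖gradient (fun y => Real.log (ps y)) x
        - gradient (fun y => Real.log (pt y)) x‖^2)))
    (hi1 : Integrable (fun x => ps x * ‖gradient (fun y => Real.log (ps y)) x‖^2))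
    (hi2 : Integrable (fun x => ps x * ‖gradient (fun y => Real.log (pt y)) x‖^2))
    (hi3 : Integrable (fun x => ps x * |lap (fun y => Real.log (pt y)) x|)) :
    ∫ x, ps x * ((1/2) * ‖gradient (fun y => Real.log (ps y)) x
        - gradient (fun y => Real.log (pt y)) x‖^2)
      = (∫ x, ps x * ((1/2) * ‖gradient (fun y => Real.log (ps y)) x‖^2))
        + ∫ x, ps x * hyv pt x :=
  fisher_divergence_eq_const_add_expected_hyvarinen_score_general ps pt hps hpt hpos hpos' hnorm hi1
    hi2 hi3
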